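/- Let $d \ge 1$, $p \in (1,\infty)$, and let $\Omega \subseteq \mathbb{R}^d$ be open. Let $(\nu_\varepsilon)_{\varepsilon \in (0,1)}$ be a $p$-Lévy approximation of the unity. Let $(u_\varepsilon)_{\varepsilon \in (0,1)}$ be measurable functions $\mathbb{R}^d \to \mathbb{R}$ with $\sup_{\varepsilon \in (0,1)} \int_{\Omega}\int_{\Omega^c} |u_\varepsilon(x) - u_\varepsilon(y)|^p\, \nu_\varepsilon(x-y)\,dy\,dx < \infty$, and let $v : \mathbb{R}^d \to \mathbb{R}$ be a bounded measurable function whose support is a compact subset of $\Omega$. Then, as $\varepsilon \to 0^+$, both $\int_{\Omega}\int_{\Omega^c} |u_\varepsilon(x)-u_\varepsilon(y)|^{p-2}(u_\varepsilon(x)-u_\varepsilon(y))\,(v(x)-v(y))\,\nu_\varepsilon(x-y)\,dy\,dx \to 0$ and $\int_{\Omega}\int_{\Omega^c} |v(x)-v(y)|^{p-2}(v(x)-v(y))\,(u_\varepsilon(x)-u_\varepsilon(y))\,\nu_\varepsilon(x-y)\,dy\,dx \to 0$ (for each $\varepsilon$ these integrands are integrable on $\Omega \times \Omega^c$). -/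

import Mathlib

open MeasureTheory Filter
open scoped ENNReal Topology

/-- A family `(ν_ε)_{ε∈(0,1)}` of measurable functions `ℝ^d → [0,∞)` is a `p`-Lévy
approximation of the unity: each `ν_ε` is radial with
`∫ (1 ∧ |h|^p) ν_ε(h) dh = 1`, and for every `δ > 0`,
`∫_{|h|>δ} ν_ε(h) dh → 0` as `ε → 0⁺`. -/
def IsPLevyApproxUnity (d : ℕ) (p : ℝ)
    (ν : ℝ → EuclideanSpace ℝ (Fin d) → ℝ) : Prop :=
  (∀ ε ∈ Set.Ioo (0 : ℝ) 1,
    Measurable (ν ε) ∧ (∀ h, 0 ≤ ν ε h) ∧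
    (∀ h h' : EuclideanSpace ℝ (Fin d), ‖h‖ = ‖h'‖ → ν ε h = ν ε h') ∧
    ∫⁻ h : EuclideanSpace ℝ (Fin d), ENNReal.ofReal (min 1 (‖h‖ ^ p) * ν ε h) = 1) ∧
  (∀ δ : ℝ, 0 < δ →
    Tendsto (fun ε => ∫⁻ h in {h : EuclideanSpace ℝ (Fin d) | δ < ‖h‖},
        ENNReal.ofReal (ν ε h))
      (𝓝[>] (0 : ℝ)) (𝓝 0))

open Set

/-!
On `Ω × Ωᶜ` both integrands vanish unless `x ∈ tsupport v` and `|x - y| > δ`, where `δ > 0` is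
chosen with `cthickening δ (tsupport v) ⊆ Ω`. Where they do not vanish they are bounded by a
constant times `|u_ε(x) - u_ε(y)|^θ ν_ε(x - y)`, with `θ = p - 1` for the first form and `θ = 1`
for the second. Hölder's inequality with exponent `p / θ` for the measure `ν_ε(x - y) dx dy`
restricted to that region bounds the integral by a constant times
`C^(θ/p) (|tsupport v| ∫_{|h|>δ} ν_ε)^(1 - θ/p)`, and the tail integral tends to `0`.
-/

theorem abs_abs_rpow_sub_two_mul_self {p : ℝ} (hp : 1 < p) (t : ℝ) :
    |(|t| ^ (p - 2) * t)| = |t| ^ (p - 1) := by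
  rw [abs_mul, abs_of_nonneg (Real.rpow_nonneg (abs_nonneg t) _)]
  rcases eq_or_ne t 0 with rfl | ht
  · simp [Real.zero_rpow (by linarith : p - 1 ≠ 0)]
  · rw [show p - 1 = p - 2 + 1 by ring, Real.rpow_add_one (abs_ne_zero.2 ht)]

theorem norm_abs_rpow_sub_two_mul_mul_mul_le {p : ℝ} (hp : 1 < p) (t : ℝ) {s B n : ℝ}
    (hs : |s| ≤ B) (hn : 0 ≤ n) : ‖|t| ^ (p - 2) * t * s * n‖ ≤ B * |t| ^ (p - 1) * n := by
  rw [Real.norm_eq_abs, abs_mul, abs_mul, abs_abs_rpow_sub_two_mul_self hp, abs_of_nonneg hn,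
    mul_comm B]
  gcongr

theorem norm_mul_abs_rpow_sub_two_mul_mul_le {p : ℝ} (hp : 1 < p) (t : ℝ) {s B n : ℝ}
    (hs : |s| ≤ B) (hn : 0 ≤ n) :
    ‖|s| ^ (p - 2) * s * t * n‖ ≤ B ^ (p - 1) * |t| ^ (1 : ℝ) * n := by
  rw [Real.norm_eq_abs, abs_mul, abs_mul, abs_abs_rpow_sub_two_mul_self hp, abs_of_nonneg hn,
    Real.rpow_one]
  gcongr

theorem mem_tsupport_and_lt_norm_sub {E β : Type*} [SeminormedAddCommGroup E] [AddGroup β]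
    {v : E → β} {Ω : Set E} {δ : ℝ} (hδ : Metric.cthickening δ (tsupport v) ⊆ Ω) {x y : E}
    (hy : y ∉ Ω) (hxy : v x - v y ≠ 0) : x ∈ tsupport v ∧ δ < ‖x - y‖ := by
  have hvy : v y = 0 :=
    image_eq_zero_of_notMem_tsupport fun h => hy (hδ (Metric.self_subset_cthickening _ h))
  have hx : x ∈ tsupport v := subset_tsupport v (by simpa [hvy] using hxy)
  refine ⟨hx, lt_of_not_ge fun hle => hy (hδ ?_)⟩
  exact Metric.mem_cthickening_of_dist_le y x δ _ hx (by rwa [dist_comm, dist_eq_norm])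

theorem lintegral_rpow_mul_le {α : Type*} [MeasurableSpace α] {μ : Measure α}
    {a w : α → ℝ≥0∞} (ha : AEMeasurable a μ) (hw : AEMeasurable w μ) {θ p : ℝ}
    (hθ : 0 ≤ θ) (hθp : θ ≤ p) (hp : 0 < p) :
    ∫⁻ x, a x ^ θ * w x ∂μ ≤
      (∫⁻ x, a x ^ p * w x ∂μ) ^ (θ / p) * (∫⁻ x, w x ∂μ) ^ (1 - θ / p) := by
  have hθp₀ : 0 ≤ θ / p := div_nonneg hθ hp.le
  have hθp₁ : 0 ≤ 1 - θ / p := sub_nonneg.2 ((div_le_one hp).2 hθp)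
  calc ∫⁻ x, a x ^ θ * w x ∂μ
      = ∫⁻ x, (a x ^ p * w x) ^ (θ / p) * w x ^ (1 - θ / p) ∂μ := by
        refine lintegral_congr fun x => ?_
        rw [ENNReal.mul_rpow_of_nonneg _ _ hθp₀, ← ENNReal.rpow_mul, mul_div_cancel₀ _ hp.ne',
          mul_assoc, ← ENNReal.rpow_add_of_nonneg _ _ hθp₀ hθp₁, add_sub_cancel,
          ENNReal.rpow_one]
    _ ≤ _ := ENNReal.lintegral_mul_norm_pow_le ((ha.pow_const p).mul hw) hw hθp₀ hθp₁
        (add_sub_cancel _ _)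

theorem setLIntegral_norm_gt_ne_top {E : Type*} [NormedAddCommGroup E] [MeasurableSpace E]
    [OpensMeasurableSpace E] {μ : Measure E} {p δ : ℝ} (hp : 0 ≤ p) (hδ : 0 < δ) {ν : E → ℝ}
    (hν : ∫⁻ h, ENNReal.ofReal (min 1 (‖h‖ ^ p) * ν h) ∂μ ≠ ⊤) :
    ∫⁻ h in {h | δ < ‖h‖}, ENNReal.ofReal (ν h) ∂μ ≠ ⊤ := by
  set c := ENNReal.ofReal (min 1 (δ ^ p))
  have hc : c ≠ 0 := by simpa [c] using Real.rpow_pos_of_pos hδ p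
  have hc_mul : c * ∫⁻ h in {h | δ < ‖h‖}, ENNReal.ofReal (ν h) ∂μ ≠ ⊤ := by
    refine ne_top_of_le_ne_top hν ?_
    rw [← lintegral_const_mul' _ _ ENNReal.ofReal_ne_top]
    refine (setLIntegral_mono' (measurableSet_lt measurable_const measurable_norm)
      fun h hh => ?_).trans (setLIntegral_le_lintegral _ _)
    rw [ENNReal.ofReal_mul (by positivity)]
    gcongr
    exact le_of_lt hh
  exact fun htop => hc_mul (by rw [htop, ENNReal.mul_top hc])

theorem tendsto_integral_of_lintegral_enorm_le {α E ι : Type*} [MeasurableSpace α]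
    {μ : Measure α} [NormedAddCommGroup E] [NormedSpace ℝ E] {l : Filter ι} {F : ι → α → E}
    {R : ι → ℝ≥0∞} (hF : ∀ᶠ i in l, ∫⁻ x, ‖F i x‖ₑ ∂μ ≤ R i) (hR : Tendsto R l (𝓝 0)) :
    Tendsto (fun i => ∫ x, F i x ∂μ) l (𝓝 0) :=
  tendsto_zero_iff_enorm_tendsto_zero.2 <| tendsto_of_tendsto_of_tendsto_of_le_of_le'
    tendsto_const_nhds hR (.of_forall fun _ => zero_le)
    (hF.mono fun _ hi => (enorm_integral_le_lintegral_enorm _).trans hi)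

section Translation

variable {G : Type*} [AddGroup G] [MeasurableSpace G] [MeasurableAdd G] [MeasurableNeg G]
  [MeasurableSub₂ G] {μ : Measure G} [SFinite μ] [μ.IsAddLeftInvariant] [μ.IsNegInvariant]

theorem setLIntegral_prod_comp_sub_le (K : Set G) {D : Set G} (hD : MeasurableSet D)
    (g : G → ℝ≥0∞) :
    ∫⁻ z in (fun z : G × G => z.1 - z.2) ⁻¹' D ∩ K ×ˢ univ, g (z.1 - z.2) ∂μ.prod μ ≤
      μ K * ∫⁻ h in D, g h ∂μ := by
  rw [← Measure.restrict_restrict (measurable_sub hD), ← lintegral_indicator (measurable_sub hD),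
    ← Measure.prod_restrict, Measure.restrict_univ]
  calc _ ≤ ∫⁻ x in K, ∫⁻ y, D.indicator g (x - y) ∂μ ∂μ := lintegral_prod_le _
    _ = μ K * ∫⁻ h in D, g h ∂μ := by
      simp_rw [lintegral_sub_left_eq_self, lintegral_indicator hD]
      rw [setLIntegral_const, mul_comm]

end Translation

section CrossForm

variable {G : Type*} [NormedAddCommGroup G] [MeasurableSpace G] [BorelSpace G]
  [SecondCountableTopology G] {μ : Measure G} [SFinite μ] [μ.IsAddLeftInvariant]
  [μ.IsNegInvariant]

theorem setLIntegral_enorm_le_of_le_rpow {p θ c δ : ℝ} (hθ : 0 < θ) (hθp : θ < p)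
    {Q : Set (G × G)} (hQ : MeasurableSet Q) {K : Set G} (hK : MeasurableSet K) {u ν : G → ℝ}
    (hu : Measurable u) (hν : Measurable ν) (hν₀ : ∀ h, 0 ≤ ν h) {f : G × G → ℝ}
    (hf : ∀ z ∈ Q, ‖f z‖ ≤ c * |u z.1 - u z.2| ^ θ * ν (z.1 - z.2))
    (hf_supp : ∀ z ∈ Q, f z ≠ 0 → z.1 ∈ K ∧ δ < ‖z.1 - z.2‖) :
    ∫⁻ z in Q, ‖f z‖ₑ ∂μ.prod μ ≤ ENNReal.ofReal c *
      (∫⁻ z in Q, ENNReal.ofReal (|u z.1 - u z.2| ^ p * ν (z.1 - z.2)) ∂μ.prod μ) ^ (θ / p) *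
      (μ K * ∫⁻ h in {h | δ < ‖h‖}, ENNReal.ofReal (ν h) ∂μ) ^ (1 - θ / p) := by
  have hp : 0 < p := hθ.trans hθp
  set D : Set G := {h | δ < ‖h‖}
  set S : Set (G × G) := (fun z => z.1 - z.2) ⁻¹' D ∩ K ×ˢ univ
  have hD : MeasurableSet D := measurableSet_lt measurable_const measurable_norm
  have hS : MeasurableSet S := (measurable_sub hD).inter (hK.prod .univ)
  set a : G × G → ℝ≥0∞ := fun z => ENNReal.ofReal |u z.1 - u z.2|
  set w : G × G → ℝ≥0∞ := fun z => ENNReal.ofReal (ν (z.1 - z.2))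
  have ha : Measurable a := by fun_prop
  have hw : Measurable w := by fun_prop
  have hf_le : ∀ z ∈ Q, ‖f z‖ₑ ≤ S.indicator (fun z => ENNReal.ofReal c * (a z ^ θ * w z)) z := by
    intro z hz
    by_cases hfz : f z = 0
    · simp [hfz]
    obtain ⟨hzK, hzD⟩ := hf_supp z hz hfz
    rw [indicator_of_mem (show z ∈ S from ⟨hzD, hzK, mem_univ _⟩), ← ofReal_norm]
    simp only [a, w]
    rw [ENNReal.ofReal_rpow_of_nonneg
      (abs_nonneg _) hθ.le, ← ENNReal.ofReal_mul' (hν₀ _), ← ENNReal.ofReal_mul'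
      (mul_nonneg (Real.rpow_nonneg (abs_nonneg _) _) (hν₀ _)),
      ← mul_assoc]
    exact ENNReal.ofReal_le_ofReal (hf z hz)
  have h_mass : ∫⁻ z in S ∩ Q, w z ∂μ.prod μ ≤ μ K * ∫⁻ h in D, ENNReal.ofReal (ν h) ∂μ :=
    (lintegral_mono_set inter_subset_left).trans
      (setLIntegral_prod_comp_sub_le K hD _)
  have h_energy : ∫⁻ z in S ∩ Q, a z ^ p * w z ∂μ.prod μ ≤
      ∫⁻ z in Q, ENNReal.ofReal (|u z.1 - u z.2| ^ p * ν (z.1 - z.2)) ∂μ.prod μ := by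
    refine (lintegral_mono_set inter_subset_right).trans_eq (lintegral_congr fun z => ?_)
    rw [ENNReal.ofReal_mul (by positivity), ENNReal.ofReal_rpow_of_nonneg (abs_nonneg _) hp.le]
  calc ∫⁻ z in Q, ‖f z‖ₑ ∂μ.prod μ
      ≤ ∫⁻ z in Q, S.indicator (fun z => ENNReal.ofReal c * (a z ^ θ * w z)) z ∂μ.prod μ :=
        setLIntegral_mono' hQ hf_le
    _ = ENNReal.ofReal c * ∫⁻ z in S ∩ Q, a z ^ θ * w z ∂μ.prod μ := by
        rw [lintegral_indicator hS, Measure.restrict_restrict hS,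
          lintegral_const_mul' _ _ ENNReal.ofReal_ne_top]
    _ ≤ ENNReal.ofReal c * ((∫⁻ z in S ∩ Q, a z ^ p * w z ∂μ.prod μ) ^ (θ / p) *
          (∫⁻ z in S ∩ Q, w z ∂μ.prod μ) ^ (1 - θ / p)) := by
        gcongr
        exact lintegral_rpow_mul_le ha.aemeasurable hw.aemeasurable hθ.le hθp.le hp
    _ ≤ _ := by
        rw [mul_assoc]
        gcongr
        exact sub_nonneg.2 ((div_le_one hp).2 hθp.le)

theorem integrableOn_and_tendsto_setIntegral_of_le_rpow [IsFiniteMeasureOnCompacts μ]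
    {p θ c δ : ℝ} (hθ : 0 < θ) (hθp : θ < p) {Q : Set (G × G)} (hQ : MeasurableSet Q)
    {K : Set G} (hK : IsCompact K) {u ν : ℝ → G → ℝ}
    (hu : ∀ ε ∈ Ioo (0 : ℝ) 1, Measurable (u ε)) (hν : ∀ ε ∈ Ioo (0 : ℝ) 1, Measurable (ν ε))
    (hν₀ : ∀ ε ∈ Ioo (0 : ℝ) 1, ∀ h, 0 ≤ ν ε h)
    (hν_tail : ∀ ε ∈ Ioo (0 : ℝ) 1, ∫⁻ h in {h | δ < ‖h‖}, ENNReal.ofReal (ν ε h) ∂μ ≠ ⊤)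
    (hν_tail_zero : Tendsto (fun ε => ∫⁻ h in {h | δ < ‖h‖}, ENNReal.ofReal (ν ε h) ∂μ)
      (𝓝[>] 0) (𝓝 0))
    {C : ℝ≥0∞} (hC : C ≠ ⊤) (hu_energy : ∀ ε ∈ Ioo (0 : ℝ) 1,
      ∫⁻ z in Q, ENNReal.ofReal (|u ε z.1 - u ε z.2| ^ p * ν ε (z.1 - z.2)) ∂μ.prod μ ≤ C)
    {f : ℝ → G × G → ℝ} (hf : ∀ ε ∈ Ioo (0 : ℝ) 1, Measurable (f ε))
    (hf_le : ∀ ε ∈ Ioo (0 : ℝ) 1, ∀ z ∈ Q,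
      ‖f ε z‖ ≤ c * |u ε z.1 - u ε z.2| ^ θ * ν ε (z.1 - z.2))
    (hf_supp : ∀ ε ∈ Ioo (0 : ℝ) 1, ∀ z ∈ Q, f ε z ≠ 0 → z.1 ∈ K ∧ δ < ‖z.1 - z.2‖) :
    (∀ ε ∈ Ioo (0 : ℝ) 1, IntegrableOn (f ε) Q (μ.prod μ)) ∧
      Tendsto (fun ε => ∫ z in Q, f ε z ∂μ.prod μ) (𝓝[>] 0) (𝓝 0) := by
  have hp : 0 < p := hθ.trans hθp
  have hθp₁ : 0 < 1 - θ / p := sub_pos.2 ((div_lt_one hp).2 hθp)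
  have hK_fin : μ K ≠ ⊤ := hK.measure_lt_top.ne
  set T := fun ε => ∫⁻ h in {h | δ < ‖h‖}, ENNReal.ofReal (ν ε h) ∂μ
  set R := fun ε => ENNReal.ofReal c * C ^ (θ / p) * (μ K * T ε) ^ (1 - θ / p)
  have hfR : ∀ ε ∈ Ioo (0 : ℝ) 1, ∫⁻ z in Q, ‖f ε z‖ₑ ∂μ.prod μ ≤ R ε := fun ε hε =>
    (setLIntegral_enorm_le_of_le_rpow hθ hθp hQ hK.measurableSet (hu ε hε) (hν ε hε)
      (hν₀ ε hε) (hf_le ε hε) (hf_supp ε hε)).trans (by simp only [R]; gcongr; exact hu_energy ε hε)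
  have hR_fin : ∀ ε ∈ Ioo (0 : ℝ) 1, R ε ≠ ⊤ := fun ε hε => by
    have hT := hν_tail ε hε
    simp only [R]
    finiteness
  have hR_zero : Tendsto R (𝓝[>] 0) (𝓝 0) := by
    have hKT : Tendsto (fun ε => μ K * T ε) (𝓝[>] 0) (𝓝 0) := by
      simpa using ENNReal.Tendsto.const_mul hν_tail_zero (Or.inr hK_fin)
    have : Tendsto R (𝓝[>] 0) (𝓝 (ENNReal.ofReal c * C ^ (θ / p) * 0 ^ (1 - θ / p))) :=
      ENNReal.Tendsto.const_mul ((ENNReal.continuous_rpow_const.tendsto 0).comp hKT)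
        (Or.inr (by finiteness))
    rwa [ENNReal.zero_rpow_of_pos hθp₁, mul_zero] at this
  refine ⟨fun ε hε => ⟨(hf ε hε).aestronglyMeasurable, (hfR ε hε).trans_lt (hR_fin ε hε).lt_top⟩,
    tendsto_integral_of_lintegral_enorm_le ?_ hR_zero⟩
  filter_upwards [Ioo_mem_nhdsGT one_pos] with ε hε using hfR ε hε

end CrossForm

theorem stmt_12_general (d : ℕ) (p : ℝ) (hp : 1 < p)
    (Ω : Set (EuclideanSpace ℝ (Fin d))) (hΩ : IsOpen Ω)
    (ν : ℝ → EuclideanSpace ℝ (Fin d) → ℝ) (hν : IsPLevyApproxUnity d p ν)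
    (uf : ℝ → EuclideanSpace ℝ (Fin d) → ℝ)
    (huf : ∀ ε ∈ Set.Ioo (0 : ℝ) 1, Measurable (uf ε))
    (hbdd : ∃ C : ℝ≥0∞, C ≠ ⊤ ∧ ∀ ε ∈ Set.Ioo (0 : ℝ) 1,
      ∫⁻ z in Ω ×ˢ Ωᶜ, ENNReal.ofReal (|uf ε z.1 - uf ε z.2| ^ p * ν ε (z.1 - z.2)) ≤ C)
    (v : EuclideanSpace ℝ (Fin d) → ℝ) (hv : Measurable v)
    (M : ℝ) (hvM : ∀ x, |v x| ≤ M)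
    (hvsupp : HasCompactSupport v) (hvΩ : tsupport v ⊆ Ω) :
    (∀ ε ∈ Set.Ioo (0 : ℝ) 1,
      IntegrableOn (fun z : EuclideanSpace ℝ (Fin d) × EuclideanSpace ℝ (Fin d) =>
        |uf ε z.1 - uf ε z.2| ^ (p - 2) * (uf ε z.1 - uf ε z.2) * (v z.1 - v z.2) *
          ν ε (z.1 - z.2)) (Ω ×ˢ Ωᶜ) ∧
      IntegrableOn (fun z : EuclideanSpace ℝ (Fin d) × EuclideanSpace ℝ (Fin d) =>
        |v z.1 - v z.2| ^ (p - 2) * (v z.1 - v z.2) * (uf ε z.1 - uf ε z.2) *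
          ν ε (z.1 - z.2)) (Ω ×ˢ Ωᶜ)) ∧
    Tendsto (fun ε => ∫ z in Ω ×ˢ Ωᶜ,
        |uf ε z.1 - uf ε z.2| ^ (p - 2) * (uf ε z.1 - uf ε z.2) * (v z.1 - v z.2) *
          ν ε (z.1 - z.2)) (𝓝[>] (0 : ℝ)) (𝓝 0) ∧
    Tendsto (fun ε => ∫ z in Ω ×ˢ Ωᶜ,
        |v z.1 - v z.2| ^ (p - 2) * (v z.1 - v z.2) * (uf ε z.1 - uf ε z.2) *
          ν ε (z.1 - z.2)) (𝓝[>] (0 : ℝ)) (𝓝 0) := by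
  obtain ⟨C, hC, hu_energy⟩ := hbdd
  obtain ⟨hν_ε, hν_tail_zero⟩ := hν
  have hν_meas ε hε : Measurable (ν ε) := (hν_ε ε hε).1
  have hν₀ ε hε : ∀ h, 0 ≤ ν ε h := (hν_ε ε hε).2.1
  obtain ⟨δ, hδ, hδΩ⟩ := hvsupp.exists_cthickening_subset_open hΩ hvΩ
  have hν_tail ε (hε : ε ∈ Ioo (0 : ℝ) 1) :
      ∫⁻ h in {h | δ < ‖h‖}, ENNReal.ofReal (ν ε h) ≠ ⊤ :=
    setLIntegral_norm_gt_ne_top (by linarith) hδ ((hν_ε ε hε).2.2.2 ▸ ENNReal.one_ne_top)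
  have hQ : MeasurableSet (Ω ×ˢ Ωᶜ) := hΩ.measurableSet.prod hΩ.measurableSet.compl
  have hv_sub x y : |v x - v y| ≤ 2 * M := (abs_sub _ _).trans (by linarith [hvM x, hvM y])
  have hv_supp : ∀ z ∈ Ω ×ˢ Ωᶜ, v z.1 - v z.2 ≠ 0 → z.1 ∈ tsupport v ∧ δ < ‖z.1 - z.2‖ :=
    fun z hz => mem_tsupport_and_lt_norm_sub hδΩ hz.2
  obtain ⟨hint₁, hlim₁⟩ := integrableOn_and_tendsto_setIntegral_of_le_rpow
    (by linarith : 0 < p - 1) (by linarith : p - 1 < p) hQ hvsupp huf hν_meas hν₀ hν_tail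
    (hν_tail_zero δ hδ) hC hu_energy (fun ε hε => by fun_prop)
    (fun ε hε z _ => norm_abs_rpow_sub_two_mul_mul_mul_le hp _ (hv_sub _ _) (hν₀ ε hε _))
    (fun ε hε z hz hf => hv_supp z hz (right_ne_zero_of_mul (left_ne_zero_of_mul hf)))
  obtain ⟨hint₂, hlim₂⟩ := integrableOn_and_tendsto_setIntegral_of_le_rpow
    one_pos hp hQ hvsupp huf hν_meas hν₀ hν_tail
    (hν_tail_zero δ hδ) hC hu_energy (fun ε hε => by fun_prop)
    (fun ε hε z _ => norm_mul_abs_rpow_sub_two_mul_mul_le hp _ (hv_sub _ _) (hν₀ ε hε _))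
    (fun ε hε z hz hf => hv_supp z hz
      (right_ne_zero_of_mul (left_ne_zero_of_mul (left_ne_zero_of_mul hf))))
  exact ⟨fun ε hε => ⟨hint₁ ε hε, hint₂ ε hε⟩, hlim₁, hlim₂⟩

/-- Collapse of the cross forms across the boundary: if
`sup_ε ∫_Ω∫_{Ω^c} |u_ε(x)-u_ε(y)|^p ν_ε(x-y) dy dx < ∞` and `v` is bounded measurable
with compact support contained in the open set `Ω`, then both cross integrals
`∫_Ω∫_{Ω^c} |u_ε(x)-u_ε(y)|^{p-2}(u_ε(x)-u_ε(y))(v(x)-v(y)) ν_ε(x-y)` and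
`∫_Ω∫_{Ω^c} |v(x)-v(y)|^{p-2}(v(x)-v(y))(u_ε(x)-u_ε(y)) ν_ε(x-y)` tend to `0`
as `ε → 0⁺`, the integrands being integrable on `Ω × Ω^c` for each `ε`. -/
theorem stmt_12 (d : ℕ) (hd : 1 ≤ d) (p : ℝ) (hp : 1 < p)
    (Ω : Set (EuclideanSpace ℝ (Fin d))) (hΩ : IsOpen Ω)
    (ν : ℝ → EuclideanSpace ℝ (Fin d) → ℝ) (hν : IsPLevyApproxUnity d p ν)
    (uf : ℝ → EuclideanSpace ℝ (Fin d) → ℝ)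
    (huf : ∀ ε ∈ Set.Ioo (0 : ℝ) 1, Measurable (uf ε))
    (hbdd : ∃ C : ℝ≥0∞, C ≠ ⊤ ∧ ∀ ε ∈ Set.Ioo (0 : ℝ) 1,
      ∫⁻ z in Ω ×ˢ Ωᶜ, ENNReal.ofReal (|uf ε z.1 - uf ε z.2| ^ p * ν ε (z.1 - z.2)) ≤ C)
    (v : EuclideanSpace ℝ (Fin d) → ℝ) (hv : Measurable v)
    (M : ℝ) (hvM : ∀ x, |v x| ≤ M)
    (hvsupp : HasCompactSupport v) (hvΩ : tsupport v ⊆ Ω) :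
    (∀ ε ∈ Set.Ioo (0 : ℝ) 1,
      IntegrableOn (fun z : EuclideanSpace ℝ (Fin d) × EuclideanSpace ℝ (Fin d) =>
        |uf ε z.1 - uf ε z.2| ^ (p - 2) * (uf ε z.1 - uf ε z.2) * (v z.1 - v z.2) *
          ν ε (z.1 - z.2)) (Ω ×ˢ Ωᶜ) ∧
      IntegrableOn (fun z : EuclideanSpace ℝ (Fin d) × EuclideanSpace ℝ (Fin d) =>
        |v z.1 - v z.2| ^ (p - 2) * (v z.1 - v z.2) * (uf ε z.1 - uf ε z.2) *
          ν ε (z.1 - z.2)) (Ω ×ˢ Ωᶜ)) ∧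
    Tendsto (fun ε => ∫ z in Ω ×ˢ Ωᶜ,
        |uf ε z.1 - uf ε z.2| ^ (p - 2) * (uf ε z.1 - uf ε z.2) * (v z.1 - v z.2) *
          ν ε (z.1 - z.2)) (𝓝[>] (0 : ℝ)) (𝓝 0) ∧
    Tendsto (fun ε => ∫ z in Ω ×ˢ Ωᶜ,
        |v z.1 - v z.2| ^ (p - 2) * (v z.1 - v z.2) * (uf ε z.1 - uf ε z.2) *
          ν ε (z.1 - z.2)) (𝓝[>] (0 : ℝ)) (𝓝 0) :=
  stmt_12_general d p hp Ω hΩ ν hν uf huf hbdd v hv M hvM hvsupp hvΩ
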